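/- For w ∈ W, define π̃_w(x) = Π_{β ∈ R₀⁺ ∩ wR₀⁺} (1 + (β∨, x)). (1) If α ∈ R₀⁺ ∩ wR₀⁺, then for every x ∈ w a₊, π̃_{r_α w}(r_α x) ≤ π̃_w(x) / (1 + (α∨, x)). (2) If α ∈ R₀⁻ ∩ wR₀⁺, then there exists a constant C > 0 such that π̃_{r_α w}(r_α x) ≤ C · π̃_w(x) · (1 + (α∨, x))^{|R⁺|} for every x ∈ w a₊. -/

import Mathlib

open scoped BigOperators RealInnerProductSpace Classical

noncomputable section

variable {E : Type*} [NormedAddCommGroup E] [InnerProductSpace ℝ E] [FiniteDimensional ℝ E]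

/-- The coroot `α∨ = 2α/|α|²`. -/
def coroot (α : E) : E := (2 / ⟪α, α⟫) • α

/-- The orthogonal reflection `r_α x = x - (α∨, x) α`. -/
def rRefl (α : E) (x : E) : E := x - ⟪coroot α, x⟫ • α

/-- Data of an integral root system with positive subsystem and
a Weyl-invariant positive multiplicity function. -/
structure HOData (E : Type*) [NormedAddCommGroup E] [InnerProductSpace ℝ E] : Type _ where
  R : Finset E
  Rpos : Finset E
  k : E → ℝ
  k_pos : ∀ α ∈ R, 0 < k α
  root_ne_zero : ∀ α ∈ R, α ≠ 0
  pos_subset : Rpos ⊆ R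
  pos_char : ∃ u : E, ∀ α ∈ R, (α ∈ Rpos ↔ 0 < ⟪α, u⟫)
  pos_or_neg : ∀ α ∈ R, α ∈ Rpos ∨ -α ∈ Rpos
  neg_mem : ∀ α ∈ R, -α ∈ R
  integral : ∀ α ∈ R, ∀ β ∈ R, ∃ n : ℤ, ⟪coroot α, β⟫ = (n : ℝ)
  refl_mem : ∀ α ∈ R, ∀ β ∈ R, rRefl α β ∈ R
  k_inv : ∀ α ∈ R, ∀ β ∈ R, k (rRefl α β) = k β

/-- The Weyl group: the subgroup of linear isometries generated by the root reflections. -/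
def weylGroup (D : HOData E) : Subgroup (E ≃ₗᵢ[ℝ] E) :=
  Subgroup.closure {w : E ≃ₗᵢ[ℝ] E | ∃ α ∈ D.R, ∀ x, w x = rRefl α x}

/-- `ρ = (1/2) Σ_{α ∈ R⁺} k_α α`. -/
def rhoHO (D : HOData E) : E := (2:ℝ)⁻¹ • ∑ α ∈ D.Rpos, D.k α • α

/-- Regular points. -/
def HORegular (D : HOData E) (x : E) : Prop := ∀ α ∈ D.R, ⟪α, x⟫ ≠ 0

/-- The (open) positive Weyl chamber. -/
def posChamber (D : HOData E) : Set E := {x | ∀ α ∈ D.Rpos, 0 < ⟪α, x⟫}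

/-- The positive indivisible roots `R₀⁺`. -/
def Rpos0 (D : HOData E) : Finset E := D.Rpos.filter (fun α => (2:ℝ)⁻¹ • α ∉ D.R)

/-- The Opdam function `G_λ` for a real parameter `λ`: an analytic function,
normalized at `0`, satisfying the Cherednik differential-difference system. -/
def IsOpdamR (D : HOData E) (lam : E) (G : E → ℝ) : Prop :=
  AnalyticOnNhd ℝ G Set.univ ∧ G 0 = 1 ∧
  ∀ ξ x, HORegular D x →
    fderiv ℝ G x ξ =
      (∑ α ∈ D.Rpos, D.k α * ⟪α, ξ⟫ / (1 - Real.exp (-⟪α, x⟫)) * (G (rRefl α x) - G x))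
      + ⟪rhoHO D + lam, ξ⟫ * G x

/-- The Opdam function `G_λ` for a complex parameter `λ = l1 + i l2 ∈ h`. -/
def IsOpdamC (D : HOData E) (l1 l2 : E) (G : E → ℂ) : Prop :=
  AnalyticOnNhd ℝ G Set.univ ∧ G 0 = 1 ∧
  ∀ ξ x, HORegular D x →
    fderiv ℝ G x ξ =
      (∑ α ∈ D.Rpos, ((D.k α * ⟪α, ξ⟫ / (1 - Real.exp (-⟪α, x⟫)) : ℝ) : ℂ)
          * (G (rRefl α x) - G x))
      + (((⟪rhoHO D + l1, ξ⟫ : ℝ) : ℂ) + Complex.I * ((⟪l2, ξ⟫ : ℝ) : ℂ)) * G x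

/-- The symmetrization `F(x) = |W|⁻¹ Σ_{w ∈ W} G(w x)` (real valued case). -/
def Fsym (D : HOData E) [Fintype (weylGroup D)] (G : E → ℝ) (x : E) : ℝ :=
  (Fintype.card (weylGroup D) : ℝ)⁻¹ * ∑ w : weylGroup D, G (w.1 x)

/-- The symmetrization `F(x) = |W|⁻¹ Σ_{w ∈ W} G(w x)` (complex valued case). -/
def FsymC (D : HOData E) [Fintype (weylGroup D)] (G : E → ℂ) (x : E) : ℂ :=
  (Fintype.card (weylGroup D) : ℂ)⁻¹ * ∑ w : weylGroup D, G (w.1 x)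

/-- `max_{w ∈ W} (w λ, x)`. -/
def maxW (D : HOData E) [Fintype (weylGroup D)] (lam x : E) : ℝ :=
  ⨆ w : weylGroup D, ⟪w.1 lam, x⟫

/-- `π̃_w(x) = Π_{β ∈ R₀⁺ ∩ wR₀⁺} (1 + (β∨, x))`, written in terms of `σ = w⁻¹`. -/
def piTilde (D : HOData E) (σ : E → E) (x : E) : ℝ :=
  ∏ β ∈ (Rpos0 D).filter (fun β => σ β ∈ Rpos0 D), (1 + ⟪coroot β, x⟫)

/-!
For `x ∈ w a₊` an indivisible positive root `β` lies in `w R₀⁺` exactly when `(β∨, x) > 0`, so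
`π̃_w(x) = ∏_{β ∈ R₀⁺} (1 + (β∨, x)⁺)`; likewise
`π̃_{r_α w}(r_α x) = ∏_{β ∈ R₀⁺} (1 + ((r_α β)∨, x)⁺)`.

In (1) the factor `β = α` of the latter product is `1`, and on `R₀⁺ ∖ {α}` the map sending `β` to
`r_α β` when that root is positive and to `β` otherwise is injective. In the second case
`(α∨, β) > 0`, so `((r_α β)∨, x) ≤ (β∨, x)`, and the product over `R₀⁺ ∖ {α}` is dominated
factor by factor.

In (2), `(β∨, r_α x) = (β∨, x) - (α∨, x) (β∨, α)` bounds each factor by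
`(1 + |(β∨, α)|) (1 + (α∨, x)) (1 + (β∨, x)⁺)`.
-/

theorem Finset.prod_le_prod_of_injOn {ι κ R : Type*} [CommMonoidWithZero R] [Preorder R]
    [ZeroLEOneClass R] [PosMulMono R] {s : Finset ι} {t : Finset κ} {f : ι → R} {g : κ → R}
    (ψ : ι → κ) (hψ : Set.MapsTo ψ s t) (hinj : Set.InjOn ψ s) (h0 : ∀ i ∈ s, 0 ≤ f i)
    (hle : ∀ i ∈ s, f i ≤ g (ψ i)) (h1 : ∀ j ∈ t, 1 ≤ g j) :
    ∏ i ∈ s, f i ≤ ∏ j ∈ t, g j := by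
  classical
  calc ∏ i ∈ s, f i ≤ ∏ i ∈ s, g (ψ i) := prod_le_prod h0 hle
    _ = ∏ j ∈ s.image ψ, g j := (prod_image hinj).symm
    _ ≤ ∏ j ∈ t, g j :=
      prod_le_prod_of_subset_of_one_le (image_subset_iff.2 hψ)
        (fun j hj => zero_le_one.trans (h1 j (image_subset_iff.2 hψ hj))) fun j hj _ => h1 j hj

theorem Function.Involutive.injOn_ite {X : Type*} {r : X → X} (hr : Function.Involutive r)
    (p : X → Prop) [DecidablePred p] :
    Set.InjOn (fun x => if p (r x) then r x else x) {x | p x} := by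
  intro x hx y hy hxy
  by_cases hrx : p (r x) <;> by_cases hry : p (r y) <;>
    simp only [hrx, hry, if_true, if_false] at hxy
  · exact hr.injective hxy
  · rw [← hxy, hr] at hry
    exact absurd hx hry
  · rw [hxy, hr] at hrx
    exact absurd hy hrx
  · exact hxy

theorem one_add_max_sub_mul_le {a b t : ℝ} (ht : 0 ≤ t) :
    1 + max (a - t * b) 0 ≤ (1 + |b|) * (1 + max a 0) * (1 + t) := by
  have hb : -(t * b) ≤ t * |b| := by nlinarith [neg_abs_le b]
  have h : max (a - t * b) 0 ≤ max a 0 + t * |b| :=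
    max_le (by linarith [le_max_left a 0]) (by positivity)
  nlinarith [abs_nonneg b, le_max_right a 0, mul_nonneg ht (abs_nonneg b),
    mul_nonneg (mul_nonneg ht (abs_nonneg b)) (le_max_right a 0)]

section Reflection

variable {E : Type*} [NormedAddCommGroup E] [InnerProductSpace ℝ E]

theorem inner_coroot (α x : E) : ⟪coroot α, x⟫ = 2 / ⟪α, α⟫ * ⟪α, x⟫ := by
  rw [coroot, real_inner_smul_left]

theorem inner_coroot_pos_iff {α : E} (hα : α ≠ 0) (x : E) :
    0 < ⟪coroot α, x⟫ ↔ 0 < ⟪α, x⟫ := by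
  have : 0 < 2 / ⟪α, α⟫ := div_pos two_pos (real_inner_self_pos.2 hα)
  rw [inner_coroot, mul_pos_iff_of_pos_left this]

theorem coroot_neg (α : E) : coroot (-α) = -coroot α := by
  simp [coroot]

theorem inner_coroot_self {α : E} (hα : α ≠ 0) : ⟪coroot α, α⟫ = 2 := by
  rw [inner_coroot, div_mul_cancel₀ _ (real_inner_self_pos.2 hα).ne']

theorem rRefl_self {α : E} (hα : α ≠ 0) : rRefl α α = -α := by
  rw [rRefl, inner_coroot_self hα, two_smul, sub_add_cancel_left]

theorem rRefl_involutive {α : E} (hα : α ≠ 0) : Function.Involutive (rRefl α) := by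
  intro x
  simp only [rRefl, inner_sub_right, real_inner_smul_right, inner_coroot_self hα]
  module

theorem rRefl_smul (α : E) (c : ℝ) (x : E) : rRefl α (c • x) = c • rRefl α x := by
  rw [rRefl, rRefl, real_inner_smul_right, smul_sub, mul_smul]

theorem inner_rRefl_left (α x y : E) : ⟪rRefl α x, y⟫ = ⟪x, rRefl α y⟫ := by
  rw [rRefl, rRefl, inner_sub_left, inner_sub_right, real_inner_smul_left, real_inner_smul_right,
    inner_coroot, inner_coroot, real_inner_comm α x]
  ring

theorem inner_rRefl_rRefl {α : E} (hα : α ≠ 0) (x y : E) : ⟪rRefl α x, rRefl α y⟫ = ⟪x, y⟫ := by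
  rw [inner_rRefl_left, rRefl_involutive hα]

theorem inner_coroot_rRefl {α : E} (hα : α ≠ 0) (β x : E) :
    ⟪coroot β, rRefl α x⟫ = ⟪coroot (rRefl α β), x⟫ := by
  rw [inner_coroot, inner_coroot, inner_rRefl_rRefl hα, inner_rRefl_left]

theorem inner_coroot_rRefl_eq_sub (α β x : E) :
    ⟪coroot β, rRefl α x⟫ = ⟪coroot β, x⟫ - ⟪coroot α, x⟫ * ⟪coroot β, α⟫ := by
  rw [rRefl, inner_sub_right, real_inner_smul_right]

end Reflection

namespace HOData

variable {E : Type*} [NormedAddCommGroup E] [InnerProductSpace ℝ E] (D : HOData E)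

def indivisibleRoots : Finset E := D.R.filter fun γ => (2:ℝ)⁻¹ • γ ∉ D.R

theorem indivisibleRoots_subset_R : D.indivisibleRoots ⊆ D.R :=
  Finset.filter_subset _ _

theorem Rpos0_subset_Rpos : Rpos0 D ⊆ D.Rpos :=
  Finset.filter_subset _ _

theorem Rpos0_subset_indivisibleRoots : Rpos0 D ⊆ D.indivisibleRoots :=
  Finset.filter_subset_filter _ D.pos_subset

theorem ne_zero_of_mem_indivisibleRoots {γ : E} (hγ : γ ∈ D.indivisibleRoots) : γ ≠ 0 :=
  D.root_ne_zero γ (D.indivisibleRoots_subset_R hγ)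

theorem neg_notMem_Rpos {α : E} (hα : α ∈ D.Rpos) : -α ∉ D.Rpos := by
  obtain ⟨u, hu⟩ := D.pos_char
  intro h
  have h1 := (hu α (D.pos_subset hα)).1 hα
  have h2 := (hu (-α) (D.pos_subset h)).1 h
  rw [inner_neg_left] at h2
  linarith

theorem mem_Rpos0_or_neg_mem_Rpos0 {γ : E} (hγ : γ ∈ D.indivisibleRoots) :
    γ ∈ Rpos0 D ∨ -γ ∈ Rpos0 D := by
  obtain ⟨hγR, hγ2⟩ := Finset.mem_filter.1 hγ
  have hnγ2 : (2:ℝ)⁻¹ • -γ ∉ D.R := fun h => hγ2 (by simpa using D.neg_mem _ h)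
  rcases D.pos_or_neg γ hγR with h | h
  · exact Or.inl (Finset.mem_filter.2 ⟨h, hγ2⟩)
  · exact Or.inr (Finset.mem_filter.2 ⟨h, hnγ2⟩)

theorem mem_Rpos0_of_mem_Rpos {γ : E} (hγ : γ ∈ D.indivisibleRoots) (hpos : γ ∈ D.Rpos) :
    γ ∈ Rpos0 D :=
  Finset.mem_filter.2 ⟨hpos, (Finset.mem_filter.1 hγ).2⟩

theorem rRefl_mem_indivisibleRoots {α γ : E} (hα : α ∈ D.R) (hγ : γ ∈ D.indivisibleRoots) :
    rRefl α γ ∈ D.indivisibleRoots := by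
  obtain ⟨hγR, hγ2⟩ := Finset.mem_filter.1 hγ
  refine Finset.mem_filter.2 ⟨D.refl_mem α hα γ hγR, fun h => hγ2 ?_⟩
  simpa [← rRefl_smul, rRefl_involutive (D.root_ne_zero α hα) _] using D.refl_mem α hα _ h

theorem mem_indivisibleRoots_iff_of_mem_weylGroup {w : E ≃ₗᵢ[ℝ] E} (hw : w ∈ weylGroup D)
    (γ : E) : w γ ∈ D.indivisibleRoots ↔ γ ∈ D.indivisibleRoots := by
  induction hw using Subgroup.closure_induction generalizing γ with
  | mem g hg =>
    obtain ⟨α, hα, hg⟩ := hg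
    refine ⟨fun h => ?_, fun h => hg γ ▸ D.rRefl_mem_indivisibleRoots hα h⟩
    rw [hg] at h
    simpa [rRefl_involutive (D.root_ne_zero α hα) γ] using D.rRefl_mem_indivisibleRoots hα h
  | one => rfl
  | mul a b _ _ ha hb => exact (ha (b γ)).trans (hb γ)
  | inv a _ ha => rw [LinearIsometryEquiv.coe_inv, ← ha, a.apply_symm_apply]

theorem symm_mem_indivisibleRoots_iff {w : E ≃ₗᵢ[ℝ] E} (hw : w ∈ weylGroup D) (γ : E) :
    w.symm γ ∈ D.indivisibleRoots ↔ γ ∈ D.indivisibleRoots := by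
  rw [← D.mem_indivisibleRoots_iff_of_mem_weylGroup hw, w.apply_symm_apply]

theorem mem_Rpos0_iff_inner_pos {y γ : E} (hy : y ∈ posChamber D)
    (hγ : γ ∈ D.indivisibleRoots) : γ ∈ Rpos0 D ↔ 0 < ⟪γ, y⟫ := by
  refine ⟨fun h => hy γ (D.Rpos0_subset_Rpos h), fun h => ?_⟩
  refine (D.mem_Rpos0_or_neg_mem_Rpos0 hγ).resolve_right fun hneg => ?_
  have := hy _ (D.Rpos0_subset_Rpos hneg)
  rw [inner_neg_left] at this
  linarith

theorem symm_mem_Rpos0_iff {w : E ≃ₗᵢ[ℝ] E} (hw : w ∈ weylGroup D) {x γ : E}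
    (hx : w.symm x ∈ posChamber D) (hγ : γ ∈ D.indivisibleRoots) :
    w.symm γ ∈ Rpos0 D ↔ 0 < ⟪coroot γ, x⟫ := by
  rw [D.mem_Rpos0_iff_inner_pos hx ((D.symm_mem_indivisibleRoots_iff hw γ).2 hγ),
    w.symm.inner_map_map, inner_coroot_pos_iff (D.ne_zero_of_mem_indivisibleRoots hγ)]

theorem inner_pos_of_rRefl_notMem_Rpos {α β : E} (hα : α ∈ D.Rpos) (hβ : β ∈ D.Rpos)
    (hrβ : rRefl α β ∈ D.R) (hrβ' : rRefl α β ∉ D.Rpos) : 0 < ⟪α, β⟫ := by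
  obtain ⟨u, hu⟩ := D.pos_char
  have hαu := (hu α (D.pos_subset hα)).1 hα
  have hβu := (hu β (D.pos_subset hβ)).1 hβ
  have hrβu : ⟪rRefl α β, u⟫ ≤ 0 := not_lt.1 fun h => hrβ' ((hu _ hrβ).2 h)
  rw [rRefl, inner_sub_left, real_inner_smul_left] at hrβu
  rw [← inner_coroot_pos_iff (D.root_ne_zero α (D.pos_subset hα))]
  nlinarith

theorem inner_coroot_rRefl_le {α β x : E} (hα : α ∈ D.Rpos) (hβ : β ∈ Rpos0 D)
    (hrβ : rRefl α β ∉ Rpos0 D) (hx : 0 ≤ ⟪coroot α, x⟫) :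
    ⟪coroot (rRefl α β), x⟫ ≤ ⟪coroot β, x⟫ := by
  have hαR := D.pos_subset hα
  have hβI := D.Rpos0_subset_indivisibleRoots hβ
  have hrβI := D.rRefl_mem_indivisibleRoots hαR hβI
  have hαβ := D.inner_pos_of_rRefl_notMem_Rpos hα (D.Rpos0_subset_Rpos hβ)
    (D.indivisibleRoots_subset_R hrβI) fun h => hrβ (D.mem_Rpos0_of_mem_Rpos hrβI h)
  rw [real_inner_comm, ← inner_coroot_pos_iff (D.ne_zero_of_mem_indivisibleRoots hβI)] at hαβ
  rw [← inner_coroot_rRefl (D.root_ne_zero α hαR), inner_coroot_rRefl_eq_sub]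
  exact sub_le_self _ (mul_nonneg hx hαβ.le)

theorem ite_rRefl_mem_Rpos0_erase {α β : E} (hα : α ∈ D.Rpos) (hβ : β ∈ (Rpos0 D).erase α) :
    (if rRefl α β ∈ Rpos0 D then rRefl α β else β) ∈ (Rpos0 D).erase α := by
  have hα0 := D.root_ne_zero α (D.pos_subset hα)
  split_ifs with hrβ
  · refine Finset.mem_erase.2 ⟨fun hrβα => D.neg_notMem_Rpos hα ?_, hrβ⟩
    have hβα : β = -α := by rw [← rRefl_involutive hα0 β, hrβα, rRefl_self hα0]
    exact hβα ▸ D.Rpos0_subset_Rpos (Finset.mem_of_mem_erase hβ)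
  · exact hβ

def piPlus (y : E) : ℝ := ∏ β ∈ Rpos0 D, (1 + max ⟪coroot β, y⟫ 0)

theorem piTilde_eq_piPlus {σ : E → E} {y : E}
    (h : ∀ β ∈ Rpos0 D, σ β ∈ Rpos0 D ↔ 0 < ⟪coroot β, y⟫) : piTilde D σ y = D.piPlus y := by
  rw [piTilde, Finset.prod_filter, piPlus]
  refine Finset.prod_congr rfl fun β hβ => ?_
  split_ifs with hσβ
  · rw [max_eq_left ((h β hβ).1 hσβ).le]
  · rw [max_eq_right (not_lt.1 fun hpos => hσβ ((h β hβ).2 hpos)), add_zero]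

theorem piTilde_symm_eq_piPlus {w : E ≃ₗᵢ[ℝ] E} (hw : w ∈ weylGroup D) {x : E}
    (hx : w.symm x ∈ posChamber D) : piTilde D (fun β => w.symm β) x = D.piPlus x :=
  D.piTilde_eq_piPlus fun _ hβ => D.symm_mem_Rpos0_iff hw hx (D.Rpos0_subset_indivisibleRoots hβ)

theorem piTilde_symm_rRefl_eq_piPlus {w : E ≃ₗᵢ[ℝ] E} (hw : w ∈ weylGroup D) {α x : E}
    (hα : α ∈ D.R) (hx : w.symm x ∈ posChamber D) :
    piTilde D (fun β => w.symm (rRefl α β)) (rRefl α x) = D.piPlus (rRefl α x) :=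
  D.piTilde_eq_piPlus fun β hβ => by
    rw [inner_coroot_rRefl (D.root_ne_zero α hα)]
    exact D.symm_mem_Rpos0_iff hw hx
      (D.rRefl_mem_indivisibleRoots hα (D.Rpos0_subset_indivisibleRoots hβ))

theorem one_le_piPlus (y : E) : 1 ≤ D.piPlus y :=
  Finset.one_le_prod fun _ _ => le_add_of_nonneg_right (le_max_right _ _)

theorem piPlus_rRefl_mul_le {α x : E} (hα : α ∈ Rpos0 D) (hx : 0 < ⟪coroot α, x⟫) :
    D.piPlus (rRefl α x) * (1 + ⟪coroot α, x⟫) ≤ D.piPlus x := by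
  have hαpos : α ∈ D.Rpos := D.Rpos0_subset_Rpos hα
  have hα0 := D.root_ne_zero α (D.pos_subset hαpos)
  set g : E → ℝ := fun γ => 1 + max ⟪coroot γ, x⟫ 0
  have hg1 (γ : E) : 1 ≤ g γ := le_add_of_nonneg_right (le_max_right _ _)
  have hgrα : g (rRefl α α) = 1 := by simp [g, rRefl_self hα0, coroot_neg, hx.le]
  have hgα : g α = 1 + ⟪coroot α, x⟫ := by simp [g, hx.le]
  have hrx : D.piPlus (rRefl α x) = ∏ β ∈ Rpos0 D, g (rRefl α β) :=
    Finset.prod_congr rfl fun β _ => by rw [inner_coroot_rRefl hα0]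
  have hfold : ∏ β ∈ (Rpos0 D).erase α, g (rRefl α β) ≤ ∏ β ∈ (Rpos0 D).erase α, g β := by
    refine Finset.prod_le_prod_of_injOn (fun β => if rRefl α β ∈ Rpos0 D then rRefl α β else β)
      (fun β hβ => D.ite_rRefl_mem_Rpos0_erase hαpos hβ)
      (((rRefl_involutive hα0).injOn_ite (· ∈ Rpos0 D)).mono fun β hβ => Finset.mem_of_mem_erase hβ)
      (fun β _ => zero_le_one.trans (hg1 _)) (fun β hβ => ?_) fun β _ => hg1 β
    split_ifs with hrβ
    · exact le_rfl
    · exact add_le_add le_rfl (max_le_max_right _ (D.inner_coroot_rRefl_le hαpos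
        (Finset.mem_of_mem_erase hβ) hrβ hx.le))
  calc D.piPlus (rRefl α x) * (1 + ⟪coroot α, x⟫)
      = g (rRefl α α) * (∏ β ∈ (Rpos0 D).erase α, g (rRefl α β)) * g α := by
        rw [hrx, ← Finset.mul_prod_erase _ _ hα, hgα]
    _ ≤ (∏ β ∈ (Rpos0 D).erase α, g β) * g α := by
        rw [hgrα, one_mul]
        exact mul_le_mul_of_nonneg_right hfold (zero_le_one.trans (hg1 α))
    _ = D.piPlus x := by rw [mul_comm, Finset.mul_prod_erase _ _ hα]; rfl

theorem piPlus_rRefl_le {α x : E} (hx : 0 ≤ ⟪coroot α, x⟫) :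
    D.piPlus (rRefl α x) ≤ (∏ β ∈ Rpos0 D, (1 + |⟪coroot β, α⟫|)) * D.piPlus x
      * (1 + ⟪coroot α, x⟫) ^ (Rpos0 D).card := by
  calc D.piPlus (rRefl α x)
      ≤ ∏ β ∈ Rpos0 D,
          ((1 + |⟪coroot β, α⟫|) * (1 + max ⟪coroot β, x⟫ 0) * (1 + ⟪coroot α, x⟫)) := by
        refine Finset.prod_le_prod (fun _ _ => by positivity) fun β _ => ?_
        rw [inner_coroot_rRefl_eq_sub]
        exact one_add_max_sub_mul_le hx
    _ = _ := by rw [Finset.prod_mul_distrib, Finset.prod_mul_distrib, Finset.prod_const]; rfl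

end HOData

/-- (1) if `α ∈ R₀⁺ ∩ wR₀⁺` then `π̃_{r_α w}(r_α x) ≤ π̃_w(x)/(1 + (α∨,x))`
for all `x ∈ w a₊`; (2) if `α ∈ R₀⁻ ∩ wR₀⁺` then there is `C > 0` with
`π̃_{r_α w}(r_α x) ≤ C π̃_w(x) (1 + (α∨,x))^{|R⁺|}` for all `x ∈ w a₊`.
(Note `(r_α w)⁻¹ = w⁻¹ ∘ r_α` and `x ∈ w a₊ ↔ w⁻¹ x ∈ a₊`.) -/
theorem statement13 (D : HOData E) :
    (∀ (w : weylGroup D) (α : E), α ∈ Rpos0 D → w.1.symm α ∈ Rpos0 D →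
      ∀ x : E, w.1.symm x ∈ posChamber D →
        piTilde D (fun β => w.1.symm (rRefl α β)) (rRefl α x)
          ≤ piTilde D (fun β => w.1.symm β) x / (1 + ⟪coroot α, x⟫)) ∧
    (∀ (w : weylGroup D) (α : E), -α ∈ Rpos0 D → w.1.symm α ∈ Rpos0 D →
      ∃ C : ℝ, 0 < C ∧ ∀ x : E, w.1.symm x ∈ posChamber D →
        piTilde D (fun β => w.1.symm (rRefl α β)) (rRefl α x)
          ≤ C * piTilde D (fun β => w.1.symm β) x
              * (1 + ⟪coroot α, x⟫) ^ (D.Rpos.card : ℕ)) := by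
  refine ⟨fun w α hα hwα x hx => ?_, fun w α _ hwα => ?_⟩
  all_goals
    have hαI := (D.symm_mem_indivisibleRoots_iff w.2 α).1 (D.Rpos0_subset_indivisibleRoots hwα)
    have hαR : α ∈ D.R := D.indivisibleRoots_subset_R hαI
  · have ht := (D.symm_mem_Rpos0_iff w.2 hx hαI).1 hwα
    rw [D.piTilde_symm_rRefl_eq_piPlus w.2 hαR hx, D.piTilde_symm_eq_piPlus w.2 hx,
      le_div_iff₀ (by linarith)]
    exact D.piPlus_rRefl_mul_le hα ht
  · refine ⟨∏ β ∈ Rpos0 D, (1 + |⟪coroot β, α⟫|), Finset.prod_pos fun _ _ => by positivity,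
      fun x hx => ?_⟩
    have ht := (D.symm_mem_Rpos0_iff w.2 hx hαI).1 hwα
    rw [D.piTilde_symm_rRefl_eq_piPlus w.2 hαR hx, D.piTilde_symm_eq_piPlus w.2 hx]
    refine (D.piPlus_rRefl_le ht.le).trans ?_
    have := D.one_le_piPlus x
    gcongr
    · linarith
    · exact D.Rpos0_subset_Rpos
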